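/- Fix q ∈ ℂ with q ≠ 0 and q not a root of unity, an integer n ≥ 1, and set c(n) = −1/(qⁿ + q⁻ⁿ)². Let (e₋₁, e₁, A) be a Podleś representation with parameter c(n) on a finite-dimensional complex vector space V such that A is invertible. Then A is diagonalizable and every eigenvalue of A belongs to the set {q^{n−2k}/(qⁿ + q⁻ⁿ) : k = 1, 2, …, n}. -/

import Mathlib

/-!
Write `λₘ = q^(n-2m) / (qⁿ + q⁻ⁿ)`. The operator `em` multiplies `A`-eigenvalues by `q²` and `e1`
divides them by `q²`, while `e1 ∘ em` and `em ∘ e1` are quadratics in `A` with roots `λ₁, λₙ₊₁`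
and `λ₀, λₙ`. The spectrum of `A` is finite and avoids `0`, and `q` is not a root of unity, so
pushing an eigenvalue `μ` up along `em` and down along `e1` must end on these roots: `μ = λₐ` with
`a ≥ 1` and `μ = λ_b` with `b ≤ n`, hence `μ = λₖ` with `1 ≤ k ≤ n`.

Semisimplicity goes by induction on `k`. On the generalized `λₖ₊₁`-eigenspace, `em` lands in the
generalized `λₖ`-eigenspace, on which `A = λₖ` (for `k = 0` it is zero); hence `em` kills
`(A - λₖ₊₁) v`, and even `v` itself when `k = 0`. Since `e1 ∘ em = -q⁴ (A - λₙ₊₁)(A - λ₁)` and a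
factor `A - ν` with `ν ≠ λₖ₊₁` is injective on the generalized `λₖ₊₁`-eigenspace, this forces
`A = λₖ₊₁` there.
-/

/-- A Podleś representation with parameter `c` on a complex vector space. -/
def PodlesRep (q c : ℂ) {V : Type*} [AddCommGroup V] [Module ℂ V]
    (em e1 A : Module.End ℂ V) : Prop :=
  em * e1 = A - A ^ 2 + c • (1 : Module.End ℂ V) ∧
  e1 * em = q ^ 2 • A - q ^ 4 • A ^ 2 + c • (1 : Module.End ℂ V) ∧
  e1 * A = q ^ 2 • (A * e1) ∧
  em * A = (q ^ 2)⁻¹ • (A * em)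

open Set

lemma zpow_injective_of_not_isOfFinOrder {G₀ : Type*} [GroupWithZero G₀] {x : G₀}
    (hx0 : x ≠ 0) (hx : ¬IsOfFinOrder x) : Function.Injective (x ^ · : ℤ → G₀) := by
  intro a b hab
  by_contra hne
  refine hx (isOfFinOrder_iff_zpow_eq_one.mpr ⟨a - b, sub_ne_zero.mpr hne, ?_⟩)
  rw [zpow_sub₀ hx0, div_eq_one_iff_eq (zpow_ne_zero _ hx0)]
  exact hab

namespace Module.End

variable {K V : Type*} [Field K] [AddCommGroup V] [Module K V] {A T S : End K V}

lemma sub_smul_one_apply_of_apply_eq_smul {μ : K} {v : V} (hv : A v = μ • v) (a : K) :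
    (A - a • 1) v = (μ - a) • v := by
  simp [hv, sub_smul]

lemma apply_eq_smul_of_mul_eq_smul_mul {ε μ : K} (hAT : A * T = ε • (T * A)) {v : V}
    (hv : A v = μ • v) : A (T v) = (ε * μ) • T v := by
  have := LinearMap.congr_fun hAT v
  simp only [mul_apply, LinearMap.smul_apply, hv, map_smul] at this
  rw [this, smul_smul]

lemma mapsTo_maxGenEigenspace_of_mul_eq_smul_mul {ε : K} (hAT : A * T = ε • (T * A)) (μ : K) :
    MapsTo T (A.maxGenEigenspace μ) (A.maxGenEigenspace (ε * μ)) := by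
  intro v hv
  simp only [SetLike.mem_coe, mem_maxGenEigenspace] at hv ⊢
  obtain ⟨k, hk⟩ := hv
  have hsemi : SemiconjBy T (ε • (A - μ • 1)) (A - (ε * μ) • 1) := by
    rw [SemiconjBy, sub_mul, hAT, mul_smul_comm, mul_sub, smul_sub, mul_smul_comm,
      smul_mul_assoc, mul_one, one_mul, smul_smul]
  refine ⟨k, ?_⟩
  have := LinearMap.congr_fun (hsemi.pow_right k).eq v
  rw [mul_apply, smul_pow, LinearMap.smul_apply, hk, smul_zero, map_zero] at this
  exact this.symm

lemma eq_zero_of_mem_maxGenEigenspace_of_sub_smul_apply {μ ν : K} {v : V}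
    (hv : v ∈ A.maxGenEigenspace μ) (hνμ : ν ≠ μ) (h : (A - ν • 1) v = 0) : v = 0 := by
  have hν : v ∈ A.eigenspace ν := by
    rw [mem_eigenspace_iff, ← sub_eq_zero]
    simpa using h
  exact (A.disjoint_genEigenspace hνμ 1 ⊤).le_bot ⟨hν, hv⟩

lemma sub_smul_one_apply_mem_maxGenEigenspace {μ : K} {v : V} (hv : v ∈ A.maxGenEigenspace μ)
    (ν : K) : (A - ν • 1) v ∈ A.maxGenEigenspace μ :=
  mapsTo_maxGenEigenspace_of_comm ((Commute.refl A).sub_right ((Commute.one_right A).smul_right ν))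
    μ hv

lemma maxGenEigenspace_eq_bot_of_not_hasEigenvalue {μ : K} (hμ : ¬A.HasEigenvalue μ) :
    A.maxGenEigenspace μ = ⊥ := by
  by_contra h
  exact hμ ((hasUnifEigenvalue_iff_hasUnifEigenvalue_one (k := ⊤) (by simp)).mp h)

lemma apply_apply_eq_of_mul_eq_quadratic {α β c a b : K}
    (h : T * S = α • A - β • A ^ 2 + c • 1) (hsum : β * (a + b) = α)
    (hprod : β * (a * b) = -c) (v : V) :
    T (S v) = -β • (A - b • 1) ((A - a • 1) v) := by
  have := LinearMap.congr_fun h v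
  simp only [mul_apply, LinearMap.add_apply, LinearMap.sub_apply,
    LinearMap.smul_apply, pow_two, one_apply] at this
  rw [this]
  simp only [LinearMap.sub_apply, LinearMap.smul_apply, one_apply, map_sub, map_smul]
  linear_combination (norm := module) hsum.symm • A v + hprod • v

lemma exists_pow_mul_eq_of_hasEigenvalue [FiniteDimensional K V] {ε β a b μ : K}
    (hε : Function.Injective (ε ^ · : ℕ → K)) (hAT : A * T = ε • (T * A)) (hβ : β ≠ 0)
    (hST : ∀ v, S (T v) = β • (A - b • 1) ((A - a • 1) v))
    (hμ : A.HasEigenvalue μ) (hμ0 : μ ≠ 0) : ∃ j : ℕ, ε ^ j * μ = a ∨ ε ^ j * μ = b := by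
  by_contra! h
  have hall : ∀ j : ℕ, A.HasEigenvalue (ε ^ j * μ) := by
    intro j
    induction j with
    | zero => simpa using hμ
    | succ j ih =>
      obtain ⟨v, hv⟩ := ih.exists_hasEigenvector
      have hAv := hv.apply_eq_smul
      have hTv : T v ≠ 0 := by
        intro h0
        have hSTv := hST v
        rw [h0, map_zero, sub_smul_one_apply_of_apply_eq_smul hAv, map_smul,
          sub_smul_one_apply_of_apply_eq_smul hAv, smul_smul, smul_smul] at hSTv
        rcases smul_eq_zero.mp hSTv.symm with hc | hc
        · simp [hβ, sub_eq_zero, (h j).1, (h j).2] at hc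
        · exact hv.2 hc
      rw [pow_succ', mul_assoc]
      exact hasEigenvalue_of_hasEigenvector
        ⟨mem_eigenspace_iff.mpr (apply_eq_smul_of_mul_eq_smul_mul hAT hAv), hTv⟩
  have hinj : Function.Injective (fun j : ℕ ↦ ε ^ j * μ) := fun i j hij ↦
    hε (mul_right_cancel₀ hμ0 hij)
  exact A.finite_hasEigenvalue.not_infinite (Set.infinite_of_injective_forall_mem hinj hall)

end Module.End

noncomputable def podlesEigenvalue (q : ℂ) (n : ℕ) (m : ℤ) : ℂ :=
  q ^ ((n : ℤ) - 2 * m) / (q ^ (n : ℤ) + q ^ (-(n : ℤ)))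

section PodlesEigenvalue

variable {q : ℂ} {n : ℕ}

lemma zpow_add_zpow_neg_ne_zero (hq : q ≠ 0) (hz : Function.Injective (q ^ · : ℤ → ℂ)) :
    q ^ (n : ℤ) + q ^ (-(n : ℤ)) ≠ 0 := by
  intro h
  rw [zpow_neg, zpow_natCast] at h
  have hqn : q ^ n ≠ 0 := pow_ne_zero n hq
  have hsq : (q ^ n) ^ 2 = -1 := by
    field_simp at h
    linear_combination h
  have h4 : q ^ (4 * n) = 1 := by
    rw [mul_comm, pow_mul, show (4 : ℕ) = 2 * 2 from rfl, pow_mul, hsq]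
    norm_num
  have hn : 4 * n = 0 := by
    exact_mod_cast hz (a₁ := ((4 * n : ℕ) : ℤ)) (a₂ := 0)
      (by simp only [zpow_natCast, h4, zpow_zero])
  obtain rfl : n = 0 := by omega
  norm_num at h

lemma podlesEigenvalue_injective (hq : q ≠ 0) (hz : Function.Injective (q ^ · : ℤ → ℂ)) :
    Function.Injective (podlesEigenvalue q n) := by
  intro a b hab
  rw [podlesEigenvalue, podlesEigenvalue, div_left_inj' (zpow_add_zpow_neg_ne_zero hq hz)] at hab
  have := hz hab
  omega

lemma sq_mul_podlesEigenvalue_add_one (hq : q ≠ 0) (m : ℤ) :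
    q ^ 2 * podlesEigenvalue q n (m + 1) = podlesEigenvalue q n m := by
  rw [podlesEigenvalue, podlesEigenvalue, mul_div_assoc', ← zpow_natCast, ← zpow_add₀ hq]
  congr 2
  push_cast
  ring

lemma pow_mul_podlesEigenvalue_add (hq : q ≠ 0) (m : ℤ) (j : ℕ) :
    (q ^ 2) ^ j * podlesEigenvalue q n (m + j) = podlesEigenvalue q n m := by
  induction j with
  | zero => simp
  | succ j ih =>
    rw [pow_succ, mul_assoc, Nat.cast_succ, ← add_assoc, sq_mul_podlesEigenvalue_add_one hq, ih]

lemma podlesEigenvalue_zero_add (hs : q ^ (n : ℤ) + q ^ (-(n : ℤ)) ≠ 0) :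
    podlesEigenvalue q n 0 + podlesEigenvalue q n n = 1 := by
  rw [podlesEigenvalue, podlesEigenvalue, ← add_div, div_eq_one_iff_eq hs]
  ring_nf

lemma podlesEigenvalue_zero_mul (hq : q ≠ 0) :
    podlesEigenvalue q n 0 * podlesEigenvalue q n n = 1 / (q ^ (n : ℤ) + q ^ (-(n : ℤ))) ^ 2 := by
  rw [podlesEigenvalue, podlesEigenvalue, div_mul_div_comm, ← zpow_add₀ hq, sq,
    show (n : ℤ) - 2 * 0 + ((n : ℤ) - 2 * n) = 0 by ring, zpow_zero]

end PodlesEigenvalue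

namespace PodlesRep

open Module End

variable {V : Type*} [AddCommGroup V] [Module ℂ V] {q : ℂ} {em e1 A : End ℂ V}

lemma mul_em {c : ℂ} (h : PodlesRep q c em e1 A) (hq : q ≠ 0) : A * em = q ^ 2 • (em * A) := by
  rw [h.2.2.2, smul_smul, mul_inv_cancel₀ (pow_ne_zero 2 hq), one_smul]

lemma mul_e1 {c : ℂ} (h : PodlesRep q c em e1 A) (hq : q ≠ 0) :
    A * e1 = (q ^ 2)⁻¹ • (e1 * A) := by
  rw [h.2.2.1, smul_smul, inv_mul_cancel₀ (pow_ne_zero 2 hq), one_smul]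

variable {n : ℕ} (hrep : PodlesRep q (-1 / (q ^ (n : ℤ) + q ^ (-(n : ℤ))) ^ 2) em e1 A)
include hrep

lemma em_e1_apply (hq : q ≠ 0) (hs : q ^ (n : ℤ) + q ^ (-(n : ℤ)) ≠ 0) (v : V) :
    em (e1 v) = (-1 : ℂ) • (A - podlesEigenvalue q n n • 1)
      ((A - podlesEigenvalue q n 0 • 1) v) := by
  refine apply_apply_eq_of_mul_eq_quadratic (α := 1) (β := 1)
    (by rw [one_smul, one_smul]; exact hrep.1) ?_ ?_ v
  · rw [one_mul, podlesEigenvalue_zero_add hs]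
  · rw [one_mul, podlesEigenvalue_zero_mul hq]
    ring

lemma e1_em_apply (hq : q ≠ 0) (hs : q ^ (n : ℤ) + q ^ (-(n : ℤ)) ≠ 0) (v : V) :
    e1 (em v) = -q ^ 4 • (A - podlesEigenvalue q n (n + 1) • 1)
      ((A - podlesEigenvalue q n 1 • 1) v) := by
  have h1 := sq_mul_podlesEigenvalue_add_one hq (n := n) 0
  have hn1 := sq_mul_podlesEigenvalue_add_one hq (n := n) n
  rw [zero_add] at h1
  refine apply_apply_eq_of_mul_eq_quadratic hrep.2.1 ?_ ?_ v
  · linear_combination q ^ 2 * h1 + q ^ 2 * hn1 + q ^ 2 * podlesEigenvalue_zero_add hs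
  · linear_combination (q ^ 2 * podlesEigenvalue q n (n + 1)) * h1
      + podlesEigenvalue q n 0 * hn1 + podlesEigenvalue_zero_mul hq

variable [FiniteDimensional ℂ V]

theorem exists_eq_podlesEigenvalue (hq : q ≠ 0) (hz : Function.Injective (q ^ · : ℤ → ℂ))
    (hA : Function.Injective A) {μ : ℂ} (hμ : A.HasEigenvalue μ) :
    ∃ k : ℕ, 1 ≤ k ∧ k ≤ n ∧ μ = podlesEigenvalue q n k := by
  have hs := zpow_add_zpow_neg_ne_zero (n := n) hq hz
  have hμ0 : μ ≠ 0 := by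
    rintro rfl
    obtain ⟨v, hv⟩ := hμ.exists_hasEigenvector
    exact hv.2 (hA (by rw [hv.apply_eq_smul, zero_smul, map_zero]))
  have hq2 : Function.Injective ((q ^ 2) ^ · : ℕ → ℂ) := fun i j hij ↦ by
    have hpow : ∀ k : ℕ, (q ^ 2) ^ k = q ^ (2 * (k : ℤ)) := fun k ↦ by
      rw [← pow_mul, ← zpow_natCast, Nat.cast_mul, Nat.cast_ofNat]
    have := @hz (2 * i) (2 * j) (by simpa only [hpow] using hij)
    omega
  have hq2inv : Function.Injective ((q ^ 2)⁻¹ ^ · : ℕ → ℂ) := fun i j hij ↦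
    hq2 (inv_inj.mp (by simpa only [inv_pow] using hij))
  obtain ⟨i, hi⟩ := exists_pow_mul_eq_of_hasEigenvalue hq2 (hrep.mul_em hq)
    (neg_ne_zero.mpr (pow_ne_zero 4 hq)) (hrep.e1_em_apply hq hs) hμ hμ0
  obtain ⟨j, hj⟩ := exists_pow_mul_eq_of_hasEigenvalue hq2inv (hrep.mul_e1 hq)
    (neg_ne_zero.mpr one_ne_zero) (hrep.em_e1_apply hq hs) hμ hμ0
  have raise : ∀ m : ℤ, (q ^ 2) ^ i * μ = podlesEigenvalue q n m →
      μ = podlesEigenvalue q n (m + i) :=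
    fun m h ↦ mul_left_cancel₀ (pow_ne_zero i (pow_ne_zero 2 hq))
      (h.trans (pow_mul_podlesEigenvalue_add hq m i).symm)
  have lower : ∀ m : ℤ, (q ^ 2)⁻¹ ^ j * μ = podlesEigenvalue q n m →
      μ = podlesEigenvalue q n (m - j) := by
    intro m h
    rw [← pow_mul_podlesEigenvalue_add hq (m - j) j, sub_add_cancel, ← h, ← mul_assoc, ← mul_pow,
      mul_inv_cancel₀ (pow_ne_zero 2 hq), one_pow, one_mul]
  obtain ⟨a, ha, rfl⟩ : ∃ a : ℤ, 1 ≤ a ∧ μ = podlesEigenvalue q n a := by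
    rcases hi with h | h
    · exact ⟨1 + i, by omega, raise 1 h⟩
    · exact ⟨n + 1 + i, by omega, raise _ h⟩
  obtain ⟨b, hb, hab⟩ : ∃ b : ℤ, b ≤ n ∧ podlesEigenvalue q n a = podlesEigenvalue q n b := by
    rcases hj with h | h
    · exact ⟨0 - j, by omega, lower 0 h⟩
    · exact ⟨n - j, by omega, lower n h⟩
  obtain rfl := podlesEigenvalue_injective hq hz hab
  exact ⟨a.toNat, by omega, by omega, by rw [Int.toNat_of_nonneg (by omega)]⟩

theorem maxGenEigenspace_podlesEigenvalue_le (hq : q ≠ 0)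
    (hz : Function.Injective (q ^ · : ℤ → ℂ)) (hA : Function.Injective A) {k : ℕ} (hk1 : 1 ≤ k)
    (hkn : k ≤ n) :
    A.maxGenEigenspace (podlesEigenvalue q n k) ≤ A.eigenspace (podlesEigenvalue q n k) := by
  have hs := zpow_add_zpow_neg_ne_zero (n := n) hq hz
  have hinj := podlesEigenvalue_injective (n := n) hq hz
  have hmaps (m : ℤ) : MapsTo em (A.maxGenEigenspace (podlesEigenvalue q n (m + 1)))
      (A.maxGenEigenspace (podlesEigenvalue q n m)) := by
    simpa only [sq_mul_podlesEigenvalue_add_one hq] using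
      mapsTo_maxGenEigenspace_of_mul_eq_smul_mul (hrep.mul_em hq) (podlesEigenvalue q n (m + 1))
  have hker (m : ℤ) (hm : m ≠ n + 1) (v : V)
      (hv : v ∈ A.maxGenEigenspace (podlesEigenvalue q n m)) (hem : em v = 0) :
      (A - podlesEigenvalue q n 1 • 1) v = 0 := by
    refine eq_zero_of_mem_maxGenEigenspace_of_sub_smul_apply
      (sub_smul_one_apply_mem_maxGenEigenspace hv _) (hinj.ne hm.symm) ?_
    have h := hrep.e1_em_apply hq hs v
    rw [hem, map_zero, eq_comm, smul_eq_zero] at h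
    exact h.resolve_left (neg_ne_zero.mpr (pow_ne_zero 4 hq))
  induction k, hk1 using Nat.le_induction with
  | base =>
    intro v hv
    have hev0 : ¬A.HasEigenvalue (podlesEigenvalue q n 0) := fun h ↦ by
      obtain ⟨k, hk, -, hk0⟩ := hrep.exists_eq_podlesEigenvalue hq hz hA h
      have := hinj hk0
      omega
    have hem : em v ∈ A.maxGenEigenspace (podlesEigenvalue q n 0) := hmaps 0 (by simpa using hv)
    rw [maxGenEigenspace_eq_bot_of_not_hasEigenvalue hev0, Submodule.mem_bot] at hem
    rw [mem_eigenspace_iff, ← sub_eq_zero]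
    simpa using hker 1 (by omega) v (by simpa using hv) hem
  | succ k hk ih =>
    intro v hv
    rw [Nat.cast_succ] at hv ⊢
    have hw := sub_smul_one_apply_mem_maxGenEigenspace hv (podlesEigenvalue q n (k + 1))
    have hAemv : A (em v) = podlesEigenvalue q n k • em v :=
      mem_eigenspace_iff.mp (ih (by omega) (hmaps k hv))
    have hemw : em ((A - podlesEigenvalue q n (k + 1) • 1) v) = 0 := by
      have hemA := LinearMap.congr_fun hrep.2.2.2 v
      simp only [mul_apply, LinearMap.smul_apply] at hemA
      rw [LinearMap.sub_apply, map_sub, LinearMap.smul_apply, one_apply, map_smul, hemA, hAemv,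
        smul_smul, ← sub_smul, ← sq_mul_podlesEigenvalue_add_one hq k,
        inv_mul_cancel_left₀ (pow_ne_zero 2 hq), sub_self, zero_smul]
    have hw0 := eq_zero_of_mem_maxGenEigenspace_of_sub_smul_apply hw (hinj.ne (by omega))
      (hker (k + 1) (by omega) _ hw hemw)
    rw [mem_eigenspace_iff, ← sub_eq_zero]
    simpa using hw0

theorem maxGenEigenspace_le_eigenspace (hq : q ≠ 0) (hz : Function.Injective (q ^ · : ℤ → ℂ))
    (hA : Function.Injective A) (μ : ℂ) : A.maxGenEigenspace μ ≤ A.eigenspace μ := by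
  by_cases hμ : A.HasEigenvalue μ
  · obtain ⟨k, hk1, hkn, rfl⟩ := hrep.exists_eq_podlesEigenvalue hq hz hA hμ
    exact hrep.maxGenEigenspace_podlesEigenvalue_le hq hz hA hk1 hkn
  · rw [maxGenEigenspace_eq_bot_of_not_hasEigenvalue hμ]
    exact bot_le

end PodlesRep

theorem stmt5_general {V : Type*} [AddCommGroup V] [Module ℂ V] [FiniteDimensional ℂ V]
    (q : ℂ) (hq : q ≠ 0) (hq' : ∀ k : ℕ, 0 < k → q ^ k ≠ 1)
    (n : ℕ)
    (em e1 A : Module.End ℂ V)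
    (hrep : PodlesRep q (-1 / (q ^ (n : ℤ) + q ^ (-(n : ℤ))) ^ 2) em e1 A)
    (hA : Function.Bijective ⇑A) :
    (⨆ μ : ℂ, Module.End.eigenspace A μ) = ⊤ ∧
    ∀ μ : ℂ, Module.End.HasEigenvalue A μ →
      ∃ k : ℕ, 1 ≤ k ∧ k ≤ n ∧
        μ = q ^ ((n : ℤ) - 2 * (k : ℤ)) / (q ^ (n : ℤ) + q ^ (-(n : ℤ))) := by
  have hfin : ¬IsOfFinOrder q := fun h ↦ by
    obtain ⟨k, hk, hk1⟩ := h.exists_pow_eq_one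
    exact hq' k hk hk1
  have hz := zpow_injective_of_not_isOfFinOrder hq hfin
  refine ⟨?_, fun μ hμ ↦ hrep.exists_eq_podlesEigenvalue hq hz hA.injective hμ⟩
  rw [eq_top_iff, ← A.iSup_maxGenEigenspace_eq_top]
  exact iSup_mono (hrep.maxGenEigenspace_le_eigenspace hq hz hA.injective)

/-- In a finite-dimensional Podleś representation with parameter `c(n) = −1/(qⁿ+q⁻ⁿ)²`
with invertible `A`, the operator `A` is diagonalizable (the sum of its eigenspaces is the whole
space) and every eigenvalue of `A` is of the form `q^(n−2k)/(qⁿ+q⁻ⁿ)` for some `1 ≤ k ≤ n`. -/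
theorem stmt5 {V : Type*} [AddCommGroup V] [Module ℂ V] [FiniteDimensional ℂ V]
    (q : ℂ) (hq : q ≠ 0) (hq' : ∀ k : ℕ, 0 < k → q ^ k ≠ 1)
    (n : ℕ) (hn : 1 ≤ n)
    (em e1 A : Module.End ℂ V)
    (hrep : PodlesRep q (-1 / (q ^ (n : ℤ) + q ^ (-(n : ℤ))) ^ 2) em e1 A)
    (hA : Function.Bijective ⇑A) :
    (⨆ μ : ℂ, Module.End.eigenspace A μ) = ⊤ ∧
    ∀ μ : ℂ, Module.End.HasEigenvalue A μ →
      ∃ k : ℕ, 1 ≤ k ∧ k ≤ n ∧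
        μ = q ^ ((n : ℤ) - 2 * (k : ℤ)) / (q ^ (n : ℤ) + q ^ (-(n : ℤ))) :=
  stmt5_general q hq hq' n em e1 A hrep hA
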